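/- arXiv:1706.01432 — 8 statements merged into one kernel-verified Lean document; each statement's English description precedes it below -/
import Mathlib

section
/- Under the threshold service policy (T, μ_l, μ_h) with μ_l < μ_h, and a joining strategy with balking threshold n₀ < T, the generalized expected waiting time satisfies W(n, m) = (n+1)/μ_l for all 0 ≤ n < m ≤ n₀, where W(n,m) is the unique solution of the first-step equations W(0, n₀) = 1/μ_l, W(n, n₀) = 1/μ_l + W(n-1, n₀-1), W(0,m) = 1/(λp_m + μ_l) + (λp_m/(λp_m+μ_l))·W(0,m+1), and W(n,m) = 1/(λp_m+μ_l) + (λp_m/(λp_m+μ_l))·W(n,m+1) + (μ_l/(λp_m+μ_l))·W(n-1,m-1) for n+1 ≤ m ≤ n₀-1. -/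
/-! The values `(n + 1) / μ_l` solve every first-step equation: in the interior the
equation averages `(n + 1) / μ_l` (after an arrival) and `n / μ_l` (after a service)
with weights proportional to `λ p_m` and `μ_l`, and adds the mean holding time
`1 / (λ p_m + μ_l)`, which is exactly what the average falls short of `(n + 1) / μ_l`.
Since the equations determine `W` by induction on `n`, and for fixed `n` by downward
induction on `m` from the balking threshold `n₀`, `W` equals this solution. -/

lemma first_step_average_eq {a μ : ℝ} (ha : 0 ≤ a) (hμ : 0 < μ) (x : ℝ) :
    1 / (a + μ) + a / (a + μ) * ((x + 1) / μ) + μ / (a + μ) * (x / μ) = (x + 1) / μ := by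
  have hs : a + μ ≠ 0 := by positivity
  field_simp
  ring

theorem generalized_waiting_time_low_rate_general
    (lam μl : ℝ) (hlam : 0 < lam) (hμl : 0 < μl)
    (n₀ : ℕ)
    (p : ℕ → ℝ) (hp : ∀ m, p m ∈ Set.Icc (0 : ℝ) 1)
    (W : ℕ → ℕ → ℝ)
    (hW1 : W 0 n₀ = 1 / μl)
    (hW2 : ∀ n, 1 ≤ n → n ≤ n₀ - 1 → W n n₀ = 1 / μl + W (n - 1) (n₀ - 1))
    (hW3 : ∀ m, 1 ≤ m → m ≤ n₀ - 1 →
      W 0 m = 1 / (lam * p m + μl) + (lam * p m / (lam * p m + μl)) * W 0 (m + 1))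
    (hW4 : ∀ n m, 1 ≤ n → n + 1 ≤ m → m ≤ n₀ - 1 →
      W n m = 1 / (lam * p m + μl) + (lam * p m / (lam * p m + μl)) * W n (m + 1)
        + (μl / (lam * p m + μl)) * W (n - 1) (m - 1)) :
    ∀ n m, n < m → m ≤ n₀ → W n m = ((n : ℝ) + 1) / μl := by
  have hrate : ∀ m, 0 ≤ lam * p m := fun m => mul_nonneg hlam.le (hp m).1
  intro n
  induction n using Nat.strong_induction_on with
  | _ n ihn =>
  intro m hnm hm
  induction hm using Nat.decreasingInduction with
  | self =>
    rcases n with _ | n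
    · simpa using hW1
    · rw [hW2 (n + 1) (by omega) (by omega), Nat.add_sub_cancel,
        ihn n (by omega) (n₀ - 1) (by omega) (by omega)]
      push_cast
      ring
  | of_succ m hm ih =>
    have hW := first_step_average_eq (hrate m) hμl n
    rcases n with _ | n
    · rw [hW3 m (by omega) (by omega), ih (by omega)]
      simpa using hW
    · rw [hW4 (n + 1) m (by omega) (by omega) (by omega), ih (by omega), Nat.add_sub_cancel,
        ihn n (by omega) (m - 1) (by omega) (by omega)]
      push_cast at hW ⊢
      exact hW

/-- Under the threshold service policy `(T, μ_l, μ_h)` and a joining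
strategy `p` with balking threshold `n₀ < T`, the generalized expected waiting times,
solving the first-step equations with constant service rate `μ_l`, satisfy
`W n m = (n+1)/μ_l` for all `0 ≤ n < m ≤ n₀`. -/
theorem generalized_waiting_time_low_rate
    (lam μl μh : ℝ) (hlam : 0 < lam) (hμl : 0 < μl) (hμlh : μl < μh)
    (T n₀ : ℕ) (hn₀T : n₀ < T) (hn₀ : 1 ≤ n₀)
    (p : ℕ → ℝ) (hp : ∀ m, p m ∈ Set.Icc (0 : ℝ) 1)
    (W : ℕ → ℕ → ℝ)
    (hW1 : W 0 n₀ = 1 / μl)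
    (hW2 : ∀ n, 1 ≤ n → n ≤ n₀ - 1 → W n n₀ = 1 / μl + W (n - 1) (n₀ - 1))
    (hW3 : ∀ m, 1 ≤ m → m ≤ n₀ - 1 →
      W 0 m = 1 / (lam * p m + μl) + (lam * p m / (lam * p m + μl)) * W 0 (m + 1))
    (hW4 : ∀ n m, 1 ≤ n → n + 1 ≤ m → m ≤ n₀ - 1 →
      W n m = 1 / (lam * p m + μl) + (lam * p m / (lam * p m + μl)) * W n (m + 1)
        + (μl / (lam * p m + μl)) * W (n - 1) (m - 1)) :
    ∀ n m, n < m → m ≤ n₀ → W n m = ((n : ℝ) + 1) / μl :=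
  generalized_waiting_time_low_rate_general lam μl hlam hμl n₀ p hp W hW1 hW2 hW3 hW4
end

section
/- If R̃·μ_l is an integer with R̃·μ_l ≤ T, then exactly two pure threshold strategies with threshold at most T are equilibria under the threshold service policy (T, μ_l, μ_h), namely n₀ = R̃·μ_l - 1 and n₀ = R̃·μ_l. -/
/-- If `R·μ_l` is an integer `k` with `k ≤ T`, then among the pure threshold
strategies with threshold `n₀ ≤ T` (delay `W n₀ n = (n+1)/μ_l` for `n ≤ n₀` when `n₀ < T`,
and `W T n = (n+1)/μ_l` for `n ≤ T-1` with `W T T = 1/μ_h + (T+1)/μ_l`), exactly the two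
thresholds `n₀ = R·μ_l - 1` and `n₀ = R·μ_l` are equilibria. -/
theorem integer_reward_two_equilibria
    (R μl μh : ℝ) (hR : 0 < R) (hμl : 0 < μl) (hμlh : μl < μh)
    (T : ℕ) (hT : 1 ≤ T)
    (k : ℕ) (hk : (k : ℝ) = R * μl) (hkT : k ≤ T)
    (W : ℕ → ℕ → ℝ)
    (hWlow : ∀ n₀ < T, ∀ n ≤ n₀, W n₀ n = ((n : ℝ) + 1) / μl)
    (hWT : ∀ n ≤ T - 1, W T n = ((n : ℝ) + 1) / μl)
    (hWTT : W T T = 1 / μh + ((T : ℝ) + 1) / μl) :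
    ∀ n₀ ≤ T, (((∀ n < n₀, W n₀ n ≤ R) ∧ R ≤ W n₀ n₀) ↔
      ((n₀ : ℝ) = R * μl - 1 ∨ (n₀ : ℝ) = R * μl)) := by
  have hk1 : 1 ≤ k := by
    by_contra h
    push_neg at h
    interval_cases k
    simp only [Nat.cast_zero] at hk
    nlinarith
  intro n₀ hn₀
  rcases lt_or_eq_of_le hn₀ with hlt | heq
  · constructor
    · rintro ⟨h1, h2⟩
      rw [hWlow n₀ hlt n₀ le_rfl, le_div_iff₀ hμl] at h2
      have hub : k ≤ n₀ + 1 := by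
        have : (k : ℝ) ≤ (n₀ : ℝ) + 1 := by rw [hk]; linarith
        exact_mod_cast this
      rcases Nat.eq_zero_or_pos n₀ with h0 | hpos
      · left
        have : k = 1 := le_antisymm (by omega) hk1
        rw [h0, ← hk, this]; norm_num
      · have h1' := h1 (n₀ - 1) (by omega)
        rw [hWlow n₀ hlt (n₀ - 1) (by omega), div_le_iff₀ hμl] at h1'
        have hlb : n₀ ≤ k := by
          have : ((n₀ - 1 : ℕ) : ℝ) + 1 ≤ (k : ℝ) := by rw [hk]; linarith
          have h2' : ((n₀ - 1 : ℕ) : ℝ) = (n₀ : ℝ) - 1 := by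
            push_cast [Nat.cast_sub hpos]; ring
          rw [h2'] at this
          have : (n₀ : ℝ) ≤ (k : ℝ) := by linarith
          exact_mod_cast this
        have hcase : n₀ = k - 1 ∨ n₀ = k := by omega
        rcases hcase with hc | hc
        · left; rw [← hk, hc]; push_cast [Nat.cast_sub hk1]; ring
        · right; rw [← hk, hc]
    · rintro (h | h)
      · have hn : n₀ = k - 1 := by
          have : (n₀ : ℝ) = (k : ℝ) - 1 := by rw [h, ← hk]
          have : (n₀ : ℝ) = ((k - 1 : ℕ) : ℝ) := by
            rw [this]; push_cast [Nat.cast_sub hk1]; ring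
          exact_mod_cast this
        subst hn
        constructor
        · intro n hn
          rw [hWlow _ hlt n (le_of_lt hn), div_le_iff₀ hμl, ← hk]
          have : n + 1 ≤ k := by omega
          exact_mod_cast this
        · rw [hWlow _ hlt _ le_rfl, le_div_iff₀ hμl, ← hk]
          push_cast [Nat.cast_sub hk1]
          linarith
      · have hn : n₀ = k := by
          have : (n₀ : ℝ) = (k : ℝ) := by rw [h, ← hk]
          exact_mod_cast this
        constructor
        · intro n hnn
          rw [hWlow _ hlt n (le_of_lt hnn), div_le_iff₀ hμl, ← hk]
          have : n + 1 ≤ k := by omega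
          exact_mod_cast this
        · rw [hWlow _ hlt _ le_rfl, le_div_iff₀ hμl, ← hk, hn]
          push_cast; linarith
  · subst heq
    constructor
    · rintro ⟨h1, _⟩
      have h1' := h1 (n₀ - 1) (by omega)
      rw [hWT (n₀ - 1) le_rfl, div_le_iff₀ hμl] at h1'
      have : ((n₀ - 1 : ℕ) : ℝ) = (n₀ : ℝ) - 1 := by
        push_cast [Nat.cast_sub hT]; ring
      rw [this] at h1'
      have hTk : n₀ ≤ k := by
        have : (n₀ : ℝ) ≤ (k : ℝ) := by rw [hk]; linarith
        exact_mod_cast this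
      right
      rw [← hk]
      exact_mod_cast congrArg (Nat.cast : ℕ → ℝ) (le_antisymm hTk hkT)
    · rintro (h | h)
      · exfalso
        have : (n₀ : ℝ) = ((k - 1 : ℕ) : ℝ) := by
          rw [h, ← hk]; push_cast [Nat.cast_sub hk1]; ring
        have hn : n₀ = k - 1 := by exact_mod_cast this
        omega
      · have hn : n₀ = k := by
          have : (n₀ : ℝ) = (k : ℝ) := by rw [h, ← hk]
          exact_mod_cast this
        constructor
        · intro n hnn
          rw [hWT n (by omega), div_le_iff₀ hμl, ← hk]
          have : n + 1 ≤ k := by omega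
          exact_mod_cast this
        · rw [hWTT]
          have hμh : 0 < μh := lt_trans hμl hμlh
          have hb : R ≤ ((n₀ : ℝ) + 1) / μl := by
            rw [le_div_iff₀ hμl, ← hk, hn]; push_cast; linarith
          have hp : 0 < 1 / μh := by positivity
          linarith
end

section
/- If R̃·μ_l < T and R̃·μ_l is not an integer, then n₀ = ⌊R̃·μ_l⌋ is the unique pure threshold equilibrium among thresholds in {0, 1, ..., T} under the threshold service policy. -/
/-- If `R·μ_l < T` and `R·μ_l` is not an integer, then `n₀ = ⌊R·μ_l⌋` is the
unique pure threshold equilibrium among thresholds in `{0, 1, ..., T}` under the threshold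
service policy (delay `W n₀ n = (n+1)/μ_l` for `n ≤ n₀` when `n₀ < T`, and for `n₀ = T`,
`W T n = (n+1)/μ_l` for `n ≤ T-1` with `W T T = 1/μ_h + (T+1)/μ_l`). -/
theorem noninteger_reward_unique_equilibrium
    (R μl μh : ℝ) (hR : 0 < R) (hμl : 0 < μl) (hμlh : μl < μh)
    (T : ℕ) (hT : 1 ≤ T)
    (hRT : R * μl < (T : ℝ)) (hnotint : ∀ z : ℤ, (z : ℝ) ≠ R * μl)
    (W : ℕ → ℕ → ℝ)
    (hWlow : ∀ n₀ < T, ∀ n ≤ n₀, W n₀ n = ((n : ℝ) + 1) / μl)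
    (hWT : ∀ n ≤ T - 1, W T n = ((n : ℝ) + 1) / μl)
    (hWTT : W T T = 1 / μh + ((T : ℝ) + 1) / μl) :
    ∀ n₀ ≤ T, (((∀ n < n₀, W n₀ n ≤ R) ∧ R ≤ W n₀ n₀) ↔ n₀ = ⌊R * μl⌋₊) := by
  intro n₀ hn₀
  have hx : 0 < R * μl := mul_pos hR hμl
  have hfloorlt : ⌊R * μl⌋₊ < T := by
    rw [Nat.floor_lt hx.le]; exact hRT
  constructor
  · rintro ⟨h1, h2⟩
    rcases lt_or_eq_of_le hn₀ with hlt | heq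
    · -- n₀ < T
      have hup : R * μl < (n₀ : ℝ) + 1 := by
        have h2' := h2
        rw [hWlow n₀ hlt n₀ le_rfl] at h2'
        have hle : R * μl ≤ (n₀ : ℝ) + 1 := (le_div_iff₀ hμl).mp h2'
        rcases lt_or_eq_of_le hle with h | h
        · exact h
        · exact absurd h (by
            have := hnotint ((n₀ : ℤ) + 1)
            push_cast at this
            exact fun he => this he.symm)
      have hlo : (n₀ : ℝ) ≤ R * μl := by
        rcases Nat.eq_zero_or_pos n₀ with h0 | hpos
        · simp [h0, hx.le]
        · have hn1 : n₀ - 1 < n₀ := Nat.sub_lt hpos one_pos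
          have := h1 (n₀ - 1) hn1
          rw [hWlow n₀ hlt (n₀ - 1) hn1.le] at this
          have hcast : ((n₀ - 1 : ℕ) : ℝ) + 1 = (n₀ : ℝ) := by
            have : (1 : ℕ) ≤ n₀ := hpos
            push_cast [this]
            ring
          rw [hcast] at this
          exact (div_le_iff₀ hμl).mp this
      symm
      rw [Nat.floor_eq_iff hx.le]
      exact ⟨hlo, hup⟩
    · -- n₀ = T : contradiction
      exfalso
      subst heq
      have hn1 : n₀ - 1 < n₀ := Nat.sub_lt hT one_pos
      have h := h1 (n₀ - 1) hn1
      rw [hWT (n₀ - 1) le_rfl] at h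
      have hcast : ((n₀ - 1 : ℕ) : ℝ) + 1 = (n₀ : ℝ) := by
        have : (1 : ℕ) ≤ n₀ := hT
        push_cast [this]
        ring
      rw [hcast] at h
      have := (div_le_iff₀ hμl).mp h
      linarith
  · rintro rfl
    have hlo : (⌊R * μl⌋₊ : ℝ) ≤ R * μl := Nat.floor_le hx.le
    have hup : R * μl < (⌊R * μl⌋₊ : ℝ) + 1 := Nat.lt_floor_add_one _
    constructor
    · intro n hn
      rw [hWlow _ hfloorlt n hn.le]
      rw [div_le_iff₀ hμl]
      have : ((n : ℝ) + 1) ≤ (⌊R * μl⌋₊ : ℝ) := by exact_mod_cast hn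
      linarith
    · rw [hWlow _ hfloorlt _ le_rfl, le_div_iff₀ hμl]
      linarith
end

section
/- If T < R̃·μ_l ≤ T + μ_l/μ_h and T = ⌊R̃·μ_l⌋, then the pure threshold strategy n₀ = T is the unique pure threshold equilibrium among thresholds in {0, 1, ..., T}. -/
/-- If `T < R·μ_l ≤ T + μ_l/μ_h` and `T = ⌊R·μ_l⌋`, then the pure threshold
strategy `n₀ = T` is the unique pure threshold equilibrium among thresholds in
`{0, 1, ..., T}` under the threshold service policy (delay `W n₀ n = (n+1)/μ_l` for
`n ≤ n₀` when `n₀ < T`, and for `n₀ = T`, `W T n = (n+1)/μ_l` for `n ≤ T-1` with the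
threshold-state delay `W T T = 1/μ_h + T/μ_l`, so that `R ≤ W T T ↔ R·μ_l ≤ T + μ_l/μ_h`). -/
theorem boundary_threshold_unique_equilibrium
    (R μl μh : ℝ) (hR : 0 < R) (hμl : 0 < μl) (hμlh : μl < μh)
    (T : ℕ) (hT : 1 ≤ T)
    (hlow : (T : ℝ) < R * μl) (hup : R * μl ≤ (T : ℝ) + μl / μh)
    (hfloor : T = ⌊R * μl⌋₊)
    (W : ℕ → ℕ → ℝ)
    (hWlow : ∀ n₀ < T, ∀ n ≤ n₀, W n₀ n = ((n : ℝ) + 1) / μl)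
    (hWT : ∀ n ≤ T - 1, W T n = ((n : ℝ) + 1) / μl)
    (hWTT : W T T = 1 / μh + (T : ℝ) / μl) :
    ∀ n₀ ≤ T, (((∀ n < n₀, W n₀ n ≤ R) ∧ R ≤ W n₀ n₀) ↔ n₀ = T) := by
  intro n₀ hn₀
  have hμh : (0:ℝ) < μh := lt_trans hμl hμlh
  constructor
  · rintro ⟨_, hge⟩
    by_contra hne
    have hlt : n₀ < T := lt_of_le_of_ne hn₀ hne
    rw [hWlow n₀ hlt n₀ le_rfl] at hge
    have h1 : R * μl ≤ (n₀ : ℝ) + 1 := (le_div_iff₀ hμl).mp hge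
    have h2 : ((n₀:ℝ) + 1) ≤ T := by exact_mod_cast hlt
    linarith
  · rintro rfl
    refine ⟨fun n hn => ?_, ?_⟩
    · have hn' : n ≤ n₀ - 1 := by omega
      rw [hWT n hn']
      have h2 : ((n:ℝ) + 1) ≤ n₀ := by exact_mod_cast hn
      rw [div_le_iff₀ hμl]
      nlinarith
    · rw [hWTT]
      have h1 : R ≤ ((n₀:ℝ) + μl/μh)/μl := by rw [le_div_iff₀ hμl]; linarith
      have h2 : ((n₀:ℝ) + μl/μh)/μl = 1/μh + (n₀:ℝ)/μl := by field_simp; ring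
      linarith
end

section
/- If R̃·μ_l > T + μ_l/μ_h, then no pure threshold strategy with threshold n₀ ∈ {0, 1, ..., T} is an equilibrium under the threshold service policy. -/
/-- If `R·μ_l > T + μ_l/μ_h`, then no pure threshold strategy with threshold
`n₀ ∈ {0, 1, ..., T}` is an equilibrium under the threshold service policy (delay
`W n₀ n = (n+1)/μ_l` for `n ≤ n₀` when `n₀ < T`, and for `n₀ = T`, `W T n = (n+1)/μ_l`
for `n ≤ T-1` with threshold-state delay `W T T = 1/μ_h + T/μ_l`). -/
theorem no_equilibrium_below_service_threshold
    (R μl μh : ℝ) (hR : 0 < R) (hμl : 0 < μl) (hμlh : μl < μh)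
    (T : ℕ) (hT : 1 ≤ T)
    (hbig : (T : ℝ) + μl / μh < R * μl)
    (W : ℕ → ℕ → ℝ)
    (hWlow : ∀ n₀ < T, ∀ n ≤ n₀, W n₀ n = ((n : ℝ) + 1) / μl)
    (hWT : ∀ n ≤ T - 1, W T n = ((n : ℝ) + 1) / μl)
    (hWTT : W T T = 1 / μh + (T : ℝ) / μl) :
    ∀ n₀ ≤ T, ¬ ((∀ n < n₀, W n₀ n ≤ R) ∧ R ≤ W n₀ n₀) := by
  intro n₀ hn₀ ⟨_, h2⟩
  have hμh : (0:ℝ) < μh := lt_trans hμl hμlh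
  rcases lt_or_eq_of_le hn₀ with h | h
  · rw [hWlow n₀ h n₀ le_rfl] at h2
    have hn : ((n₀:ℝ) + 1) ≤ (T:ℝ) := by exact_mod_cast h
    have hpos : 0 < μl / μh := div_pos hμl hμh
    have : ((n₀:ℝ) + 1) / μl < R := by
      rw [div_lt_iff₀ hμl]
      nlinarith
    linarith
  · subst h
    rw [hWTT] at h2
    have : 1 / μh + (n₀:ℝ) / μl < R := by
      rw [div_add_div _ _ (ne_of_gt hμh) (ne_of_gt hμl), div_lt_iff₀ (by positivity)]
      have h1 : (n₀:ℝ) + μl/μh < R * μl := hbig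
      have h2 : μl / μh * μh = μl := div_mul_cancel₀ _ (ne_of_gt hμh)
      nlinarith
    linarith
end

section
/- Under a pure threshold strategy with threshold n₀ and constant service rate μ (i.e., μₘ = μ for all m), the solution of the first-step waiting time equations is W(n, m) = (n+1)/μ for all 0 ≤ n < m ≤ n₀. -/
/-!
The candidate `W n m = (n + 1) / μ` satisfies every first-step equation, because
`1 / (λ + μ) + λ / (λ + μ) · (n + 1) / μ + μ / (λ + μ) · n / μ = (n + 1) / μ`.
The equations also determine `W` uniquely: by induction on `n`, and for fixed `n` by
downward induction on `m` starting from the boundary `m = n₀`, every value is expressed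
through values already known to agree with the candidate.
-/

lemma first_step_balance {lam μ : ℝ} (hs : lam + μ ≠ 0) (hμ : μ ≠ 0) (x : ℝ) :
    1 / (lam + μ) + lam / (lam + μ) * ((x + 1) / μ) + μ / (lam + μ) * (x / μ)
      = (x + 1) / μ := by
  field_simp
  ring

theorem constant_rate_waiting_time_general
    (lam μ : ℝ) (hlam : 0 < lam) (hμ : 0 < μ)
    (n₀ : ℕ)
    (W : ℕ → ℕ → ℝ)
    (hW1 : W 0 n₀ = 1 / μ)
    (hW2 : ∀ n, 1 ≤ n → n ≤ n₀ - 1 → W n n₀ = 1 / μ + W (n - 1) (n₀ - 1))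
    (hW3 : ∀ m, 1 ≤ m → m ≤ n₀ - 1 →
      W 0 m = 1 / (lam + μ) + (lam / (lam + μ)) * W 0 (m + 1))
    (hW4 : ∀ n m, 1 ≤ n → n + 1 ≤ m → m ≤ n₀ - 1 →
      W n m = 1 / (lam + μ) + (lam / (lam + μ)) * W n (m + 1)
        + (μ / (lam + μ)) * W (n - 1) (m - 1)) :
    ∀ n m, n < m → m ≤ n₀ → W n m = ((n : ℝ) + 1) / μ := by
  have hs : lam + μ ≠ 0 := by positivity
  intro n
  induction n with
  | zero =>
    intro m hm hmn
    induction hmn using Nat.decreasingInduction with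
    | self => simpa using hW1
    | of_succ k hk ih =>
      rw [hW3 k hm (by omega), ih (by omega)]
      simpa using first_step_balance hs hμ.ne' 0
  | succ n ih =>
    intro m hm hmn
    induction hmn using Nat.decreasingInduction with
    | self =>
      rw [hW2 (n + 1) (by omega) (by omega), Nat.add_sub_cancel,
        ih (n₀ - 1) (by omega) (n₀.sub_le 1)]
      push_cast
      ring
    | of_succ k hk ihk =>
      rw [hW4 (n + 1) k (by omega) hm (by omega), ihk (by omega), Nat.add_sub_cancel,
        ih (k - 1) (by omega) (by omega)]
      push_cast
      exact first_step_balance hs hμ.ne' _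

/-- Under a pure threshold strategy with threshold `n₀ ≥ 1` and constant
service rate `μ`, any solution of the first-step waiting time equations satisfies
`W n m = (n+1)/μ` for all `0 ≤ n < m ≤ n₀`. -/
theorem constant_rate_waiting_time
    (lam μ : ℝ) (hlam : 0 < lam) (hμ : 0 < μ)
    (n₀ : ℕ) (hn₀ : 1 ≤ n₀)
    (W : ℕ → ℕ → ℝ)
    (hW1 : W 0 n₀ = 1 / μ)
    (hW2 : ∀ n, 1 ≤ n → n ≤ n₀ - 1 → W n n₀ = 1 / μ + W (n - 1) (n₀ - 1))
    (hW3 : ∀ m, 1 ≤ m → m ≤ n₀ - 1 →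
      W 0 m = 1 / (lam + μ) + (lam / (lam + μ)) * W 0 (m + 1))
    (hW4 : ∀ n m, 1 ≤ n → n + 1 ≤ m → m ≤ n₀ - 1 →
      W n m = 1 / (lam + μ) + (lam / (lam + μ)) * W n (m + 1)
        + (μ / (lam + μ)) * W (n - 1) (m - 1)) :
    ∀ n m, n < m → m ≤ n₀ → W n m = ((n : ℝ) + 1) / μ :=
  constant_rate_waiting_time_general lam μ hlam hμ n₀ W hW1 hW2 hW3 hW4
end

section
/- For a pure threshold strategy with threshold n₀ and nondecreasing service rates, the delay function W(n; n₀) of a joining customer is nondecreasing in n for 0 ≤ n ≤ n₀, where W(n; n₀) = W(n, n+1) for n ≤ n₀-1 and W(n₀; n₀) = 1/μ_{n₀+1} + W(n₀-1, n₀), with W(n,m) the unique solution of the first-step linear system. -/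
/-- For a pure threshold strategy with threshold `n₀ ≥ 1`, arrival rate
`lam > 0` and nondecreasing positive service rates `μ`, the delay function
`W(n; n₀)` — equal to `W n (n+1)` for `n ≤ n₀ - 1` and to `1/μ (n₀+1) + W (n₀-1) n₀`
at `n = n₀`, where `W` solves the first-step linear system — is nondecreasing in `n`:
`W (n-1) n ≤ W n (n+1)` for all `1 ≤ n ≤ n₀ - 1`, and
`W (n₀-1) n₀ ≤ 1/μ (n₀+1) + W (n₀-1) n₀`. -/
theorem delay_monotone_pure_threshold
    (lam : ℝ) (hlam : 0 < lam)
    (μ : ℕ → ℝ) (hμpos : ∀ m, 1 ≤ m → 0 < μ m) (hμmono : Monotone μ)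
    (n₀ : ℕ) (hn₀ : 1 ≤ n₀)
    (W : ℕ → ℕ → ℝ)
    (hW1 : W 0 n₀ = 1 / μ n₀)
    (hW2 : ∀ n, 1 ≤ n → n ≤ n₀ - 1 → W n n₀ = 1 / μ n₀ + W (n - 1) (n₀ - 1))
    (hW3 : ∀ m, 1 ≤ m → m ≤ n₀ - 1 →
      W 0 m = 1 / (lam + μ m) + (lam / (lam + μ m)) * W 0 (m + 1))
    (hW4 : ∀ n m, 1 ≤ n → n + 1 ≤ m → m ≤ n₀ - 1 →
      W n m = 1 / (lam + μ m) + (lam / (lam + μ m)) * W n (m + 1)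
        + (μ m / (lam + μ m)) * W (n - 1) (m - 1)) :
    (∀ n, 1 ≤ n → n ≤ n₀ - 1 → W (n - 1) n ≤ W n (n + 1)) ∧
    W (n₀ - 1) n₀ ≤ 1 / μ (n₀ + 1) + W (n₀ - 1) n₀ := by
  have hμn₀ : 0 < μ n₀ := hμpos n₀ hn₀
  have hden : ∀ m, 1 ≤ m → 0 < lam + μ m := fun m hm => add_pos hlam (hμpos m hm)
  -- nonnegativity of W 0 m for 1 ≤ m ≤ n₀, by downward induction
  have hW0 : ∀ j m, 1 ≤ m → m ≤ n₀ → n₀ ≤ m + j → 0 ≤ W 0 m := by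
    intro j
    induction j with
    | zero =>
      intro m hm1 hm2 hm3
      have hmeq : m = n₀ := by omega
      rw [hmeq, hW1]
      exact one_div_nonneg.2 hμn₀.le
    | succ j ih =>
      intro m hm1 hm2 hm3
      by_cases hc : n₀ ≤ m + j
      · exact ih m hm1 hm2 hc
      · have hm4 : m ≤ n₀ - 1 := by omega
        have h3 := hW3 m hm1 hm4
        have hnext : 0 ≤ W 0 (m + 1) := ih (m + 1) (by omega) (by omega) (by omega)
        have hd := hden m hm1
        rw [h3]
        have h1 : (0:ℝ) ≤ 1 / (lam + μ m) := by positivity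
        have h2 : (0:ℝ) ≤ lam / (lam + μ m) := by positivity
        nlinarith [mul_nonneg h2 hnext]
  -- key monotonicity: W (n-1) (m-1) ≤ W n m
  have key : ∀ n, ∀ j m, 1 ≤ n → n ≤ n₀ - 1 → n + 1 ≤ m → m ≤ n₀ → n₀ ≤ m + j →
      W (n - 1) (m - 1) ≤ W n m := by
    intro n
    induction n with
    | zero => intro j m h1; omega
    | succ k ihn =>
      intro j
      induction j with
      | zero =>
        intro m hn1 hn2 hm1 hm2 hm3
        have hmeq : m = n₀ := by omega
        subst hmeq
        have h2 := hW2 (k + 1) (by omega) hn2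
        simp only [Nat.add_sub_cancel] at h2 ⊢
        rw [h2]
        have : (0:ℝ) ≤ 1 / μ m := one_div_nonneg.2 hμn₀.le
        linarith
      | succ j ihj =>
        intro m hn1 hn2 hm1 hm2 hm3
        by_cases hc : n₀ ≤ m + j
        · exact ihj m hn1 hn2 hm1 hm2 hc
        · have hmle : m ≤ n₀ - 1 := by omega
          have hdm : 0 < lam + μ m := hden m (by omega)
          have hdm1 : 0 < lam + μ (m - 1) := hden (m - 1) (by omega)
          have hμm1 : 0 < μ (m - 1) := hμpos (m - 1) (by omega)
          -- recursion at (k+1, m)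
          have hA := hW4 (k + 1) m (by omega) (by omega) hmle
          simp only [Nat.add_sub_cancel] at hA
          have hA' : (lam + μ m) * W (k + 1) m
              = 1 + lam * W (k + 1) (m + 1) + μ m * W k (m - 1) := by
            rw [hA]; field_simp; try ring
          -- inner IH : W k m ≤ W (k+1) (m+1)
          have hinner : W k m ≤ W (k + 1) (m + 1) := by
            have := ihj (m + 1) hn1 hn2 (by omega) (by omega) (by omega)
            simp only [Nat.add_sub_cancel] at this
            exact this
          simp only [Nat.add_sub_cancel]
          rcases Nat.eq_zero_or_pos k with hk | hk
          · -- case n = 1 : use hW3 at m-1 and nonnegativity of W 0 (m-1)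
            subst hk
            have hB := hW3 (m - 1) (by omega) (by omega)
            have hm1eq : m - 1 + 1 = m := by omega
            rw [hm1eq] at hB
            have hB' : (lam + μ (m - 1)) * W 0 (m - 1) = 1 + lam * W 0 m := by
              rw [hB]; field_simp; try ring
            have h0 : 0 ≤ W 0 (m - 1) := hW0 n₀ (m - 1) (by omega) (by omega) (by omega)
            nlinarith [mul_nonneg hlam.le (sub_nonneg.2 hinner),
              mul_nonneg hμm1.le h0]
          · -- case n ≥ 2 : use hW4 at (k, m-1) and outer IH
            have hB := hW4 k (m - 1) hk (by omega) (by omega)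
            have hm1eq : m - 1 + 1 = m := by omega
            rw [hm1eq] at hB
            have hB' : (lam + μ (m - 1)) * W k (m - 1)
                = 1 + lam * W k m + μ (m - 1) * W (k - 1) (m - 1 - 1) := by
              rw [hB]; field_simp; try ring
            have houter : W (k - 1) (m - 1 - 1) ≤ W k (m - 1) := by
              rcases Nat.exists_eq_add_of_le hk with ⟨p, hp⟩
              exact ihn n₀ (m - 1) hk (by omega) (by omega) (by omega) (by omega)
            nlinarith [mul_nonneg hlam.le (sub_nonneg.2 hinner),
              mul_nonneg hμm1.le (sub_nonneg.2 houter)]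
  constructor
  · intro n hn1 hn2
    have := key n n₀ (n + 1) hn1 hn2 (by omega) (by omega) (by omega)
    simpa using this
  · have hμ1 : 0 < μ (n₀ + 1) := hμpos (n₀ + 1) (by omega)
    have : (0:ℝ) ≤ 1 / μ (n₀ + 1) := by positivity
    linarith
end

section
/- If a mixed strategy p (with join probabilities pₙ ∈ [0,1]) is an equilibrium, then n₀(p) ≤ n_b(p) < ∞, where n₀(p) = min{n : pₙ = 0} and n_b(p) = min{n : R̃ - W(n; p) < 0}. In particular, every equilibrium strategy prescribes balking with probability 1 at some finite state. -/
/-- If a mixed strategy `p` (join probabilities `pₙ ∈ [0,1]`) is an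
equilibrium — i.e. `pₙ = 0` whenever `R < W n`, `pₙ = 1` whenever `W n < R`, and
`R = W n` whenever `pₙ ∈ (0,1)` — and the delay function satisfies
`(n+1)/M ≤ W n ≤ (n+1)/μ₁` with `0 < μ₁ ≤ M`, then the balking set `{n : pₙ = 0}` and
the negative-benefit set `{n : R - W n < 0}` are nonempty and
`n₀(p) = min{n : pₙ = 0} ≤ n_b(p) = min{n : R - W n < 0} < ∞`. In particular, every
equilibrium strategy prescribes balking with probability one at some finite state. -/
theorem equilibrium_balks_at_finite_state
    (μ₁ M R : ℝ) (hμ₁ : 0 < μ₁) (hμM : μ₁ ≤ M) (hR : 0 < R)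
    (p : ℕ → ℝ) (hp : ∀ n, p n ∈ Set.Icc (0 : ℝ) 1)
    (W : ℕ → ℝ)
    (hWb : ∀ n : ℕ, ((n : ℝ) + 1) / M ≤ W n ∧ W n ≤ ((n : ℝ) + 1) / μ₁)
    (heq : ∀ n : ℕ, (R < W n → p n = 0) ∧ (W n < R → p n = 1) ∧
      (p n ∈ Set.Ioo (0 : ℝ) 1 → R = W n)) :
    {n : ℕ | p n = 0}.Nonempty ∧ {n : ℕ | R - W n < 0}.Nonempty ∧
      sInf {n : ℕ | p n = 0} ≤ sInf {n : ℕ | R - W n < 0} := by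
  have hM : 0 < M := lt_of_lt_of_le hμ₁ hμM
  obtain ⟨n, hn⟩ := exists_nat_gt (R * M)
  have hWn : R < W n := by
    have h1 : R < ((n : ℝ) + 1) / M := by
      rw [lt_div_iff₀ hM]
      nlinarith
    exact lt_of_lt_of_le h1 (hWb n).1
  have hmem : n ∈ {m : ℕ | R - W m < 0} := by
    simp only [Set.mem_setOf_eq]; linarith
  have hsub : {m : ℕ | R - W m < 0} ⊆ {m : ℕ | p m = 0} := by
    intro m hm
    exact (heq m).1 (by simpa using sub_neg.mp hm)
  refine ⟨⟨n, hsub hmem⟩, ⟨n, hmem⟩, ?_⟩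
  exact Nat.sInf_le (hsub (Nat.sInf_mem ⟨n, hmem⟩))
end
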